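/- Under uniform i.i.d. inputs, among all Boolean functions f : {-1,1}^n → {-1,1} with a fixed value of f̂(∅) = c (|c| < 1, c a multiple of 2^{1−n}), every function canalizing in variable i achieves the maximum possible mutual information MI(f(X); X_i), namely h((1+c)/2) − (1/2)·h(|c|). -/

import Mathlib

/-- ±1 encoding of a Boolean value. -/
noncomputable def pm (b : Bool) : ℝ := if b then 1 else -1

/-- Fourier coefficient of `f` at `U` w.r.t. the uniform distribution on `{-1,1}^n`. -/
noncomputable def fhat {n : ℕ} (f : (Fin n → Bool) → Bool) (U : Finset (Fin n)) : ℝ :=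
  (2 : ℝ)⁻¹ ^ n * ∑ x : Fin n → Bool, pm (f x) * ∏ i ∈ U, pm (x i)

/-- Binary entropy in bits (with `h 0 = h 1 = 0` since `logb 2 0 = 0`). -/
noncomputable def binEnt (p : ℝ) : ℝ := -(p * Real.logb 2 p) - (1 - p) * Real.logb 2 (1 - p)

/-- Mutual information `MI(f(X); X_i)` under i.i.d. uniform inputs:
`H(f(X)) - H(f(X) | X_i)`, entropies in bits. -/
noncomputable def MI {n : ℕ} (f : (Fin n → Bool) → Bool) (i : Fin n) : ℝ :=
  binEnt ((∑ x : Fin n → Bool, if f x then (1 : ℝ) else 0) / 2 ^ n) -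
    ∑ v : Bool, (1 / 2) *
      binEnt ((∑ x : Fin n → Bool, if f x ∧ x i = v then (1 : ℝ) else 0) / 2 ^ (n - 1))

/-!
Write `q v` for the probability that `f X = true` given `X i = v`. Then
`MI f i = h((1 + c)/2) - (h(q true) + h(q false))/2` with `q true + q false = 1 + c`.
Binary entropy is concave with `h 0 = 0`, hence subadditive on `[0, 1]`, and symmetric under
`p ↦ 1 - p`; together these give `h |c| ≤ h(q true) + h(q false)` for every Boolean function.
A function canalizing in `i` has `q a ∈ {0, 1}`, and then the bound is attained.
-/

open Finset Real

lemma binEnt_eq_binEntropy_div (p : ℝ) : binEnt p = binEntropy p / log 2 := by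
  simp only [binEnt, binEntropy, logb, log_inv]
  ring

lemma binEnt_zero : binEnt 0 = 0 := by
  simp [binEnt]

lemma binEnt_one : binEnt 1 = 0 := by
  simp [binEnt]

lemma binEnt_one_sub (p : ℝ) : binEnt (1 - p) = binEnt p := by
  simp only [binEnt_eq_binEntropy_div, binEntropy_one_sub]

lemma concaveOn_binEnt : ConcaveOn ℝ (Set.Icc 0 1) binEnt := by
  have h : binEnt = fun p => (log 2)⁻¹ • binEntropy p := by
    funext p
    rw [binEnt_eq_binEntropy_div, smul_eq_mul, inv_mul_eq_div]
  rw [h]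
  exact strictConcave_binEntropy.concaveOn.smul (by positivity)

/-- Both `x` and `y` are convex combinations of `0` and `x + y`. -/
lemma ConcaveOn.map_add_le {s : Set ℝ} {f : ℝ → ℝ} (hf : ConcaveOn ℝ s f) (h0 : 0 ∈ s)
    (hf0 : 0 ≤ f 0) {x y : ℝ} (hx : 0 ≤ x) (hy : 0 ≤ y) (hxy : x + y ∈ s) :
    f (x + y) ≤ f x + f y := by
  rcases (add_nonneg hx hy).eq_or_lt with hzero | hpos
  · obtain ⟨rfl, rfl⟩ : x = 0 ∧ y = 0 := ⟨by linarith, by linarith⟩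
    simpa using hf0
  have key : ∀ t, 0 ≤ t → t ≤ x + y → t / (x + y) * f (x + y) ≤ f t := by
    intro t ht0 ht
    have hw : 0 ≤ t / (x + y) := div_nonneg ht0 hpos.le
    have hw' : 0 ≤ 1 - t / (x + y) := by rw [sub_nonneg, div_le_one hpos]; exact ht
    have h := hf.2 hxy h0 hw hw' (add_sub_cancel _ _)
    simp only [smul_eq_mul, mul_zero, add_zero, div_mul_cancel₀ t hpos.ne'] at h
    linarith [mul_nonneg hw' hf0]
  calc f (x + y) = x / (x + y) * f (x + y) + y / (x + y) * f (x + y) := by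
        rw [← add_mul, ← add_div, div_self hpos.ne', one_mul]
    _ ≤ f x + f y := add_le_add (key x hx (by linarith)) (key y hy (by linarith))

lemma binEnt_add_le {x y : ℝ} (hx : 0 ≤ x) (hy : 0 ≤ y) (hxy : x + y ≤ 1) :
    binEnt (x + y) ≤ binEnt x + binEnt y :=
  concaveOn_binEnt.map_add_le (by simp) binEnt_zero.ge hx hy ⟨by linarith, hxy⟩

/-- By the symmetry `binEnt (1 - p) = binEnt p`, this is subadditivity of `binEnt`
applied to `1 - q, 1 - r` when `0 ≤ c`, and to `q, r` when `c < 0`. -/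
lemma binEnt_abs_le_add {c q r : ℝ} (hq : q ∈ Set.Icc (0 : ℝ) 1) (hr : r ∈ Set.Icc (0 : ℝ) 1)
    (hqr : q + r = 1 + c) : binEnt |c| ≤ binEnt q + binEnt r := by
  obtain ⟨hq0, hq1⟩ := hq
  obtain ⟨hr0, hr1⟩ := hr
  rcases le_or_gt 0 c with hc | hc
  · have h := binEnt_add_le (x := 1 - q) (y := 1 - r) (by linarith) (by linarith) (by linarith)
    rwa [binEnt_one_sub, binEnt_one_sub, show 1 - q + (1 - r) = 1 - c by linarith,
      binEnt_one_sub, ← abs_of_nonneg hc] at h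
  · have h := binEnt_add_le hq0 hr0 (by linarith)
    rwa [hqr, ← binEnt_one_sub, show 1 - (1 + c) = |c| by rw [abs_of_neg hc]; ring] at h

section Counting

variable {n : ℕ}

lemma sum_ite_apply_eq_two_pow (i : Fin n) (v : Bool) :
    ∑ x : Fin n → Bool, (if x i = v then (1 : ℝ) else 0) = 2 ^ (n - 1) := by
  rw [sum_boole, ← Fintype.piFinset_univ,
    Fintype.card_filter_piFinset_const_eq_of_mem _ _ (mem_univ v)]
  simp

noncomputable def probTrue (g : (Fin n → Bool) → Bool) : ℝ :=
  (∑ x : Fin n → Bool, if g x then (1 : ℝ) else 0) / 2 ^ n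

noncomputable def condProbTrue (g : (Fin n → Bool) → Bool) (i : Fin n) (v : Bool) : ℝ :=
  (∑ x : Fin n → Bool, if g x ∧ x i = v then (1 : ℝ) else 0) / 2 ^ (n - 1)

lemma probTrue_eq_fhat_empty (g : (Fin n → Bool) → Bool) : probTrue g = (1 + fhat g ∅) / 2 := by
  have hpm : ∀ b, pm b = 2 * (if b then 1 else 0) - 1 := by
    intro b; cases b <;> norm_num [pm]
  simp only [probTrue, fhat, prod_empty, mul_one, hpm, sum_sub_distrib, ← mul_sum, sum_const,
    card_univ, Fintype.card_fun, Fintype.card_bool, Fintype.card_fin, nsmul_eq_mul]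
  rw [inv_pow]
  field_simp
  push_cast
  ring

lemma condProbTrue_mem_Icc (g : (Fin n → Bool) → Bool) (i : Fin n) (v : Bool) :
    condProbTrue g i v ∈ Set.Icc 0 1 := by
  refine ⟨by unfold condProbTrue; positivity, (div_le_one (by positivity)).2 ?_⟩
  rw [← sum_ite_apply_eq_two_pow i v]
  refine sum_le_sum fun x _ => ?_
  split_ifs <;> simp_all

lemma condProbTrue_add_condProbTrue_not (g : (Fin n → Bool) → Bool) (i : Fin n) (v : Bool) :
    condProbTrue g i v + condProbTrue g i (!v) = 1 + fhat g ∅ := by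
  have hsplit : ∀ x : Fin n → Bool,
      ((if g x ∧ x i = v then (1 : ℝ) else 0) + if g x ∧ x i = !v then 1 else 0) =
        if g x then 1 else 0 := by
    intro x; cases g x <;> cases x i <;> cases v <;> simp
  have h := probTrue_eq_fhat_empty g
  rw [probTrue, ← pow_sub_one_mul (Fin.pos i).ne'] at h
  rw [condProbTrue, condProbTrue, ← add_div, ← sum_add_distrib, sum_congr rfl
    fun x _ => hsplit x]
  field_simp at h ⊢
  linarith

lemma MI_eq_condProbTrue (g : (Fin n → Bool) → Bool) (i : Fin n) (v : Bool) :
    MI g i = binEnt (probTrue g) -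
      (binEnt (condProbTrue g i v) + binEnt (condProbTrue g i (!v))) / 2 := by
  rw [MI, Fintype.sum_bool]
  cases v <;> simp only [condProbTrue, probTrue, Bool.not_true, Bool.not_false] <;> ring

lemma condProbTrue_of_canalizing {f : (Fin n → Bool) → Bool} {i : Fin n} {a b : Bool}
    (hcan : ∀ x : Fin n → Bool, x i = a → f x = b) :
    condProbTrue f i a = if b then 1 else 0 := by
  have hpos : (0 : ℝ) < 2 ^ (n - 1) := by positivity
  rw [condProbTrue, eq_comm, eq_div_iff hpos.ne', ← sum_ite_apply_eq_two_pow i a, mul_sum]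
  refine sum_congr rfl fun x _ => ?_
  by_cases hx : x i = a
  · simp [hx, hcan x hx]
  · simp [hx]

end Counting

lemma MI_le_binEnt_sub_half_binEnt_abs {n : ℕ} (g : (Fin n → Bool) → Bool) (i : Fin n) :
    MI g i ≤ binEnt ((1 + fhat g ∅) / 2) - 1 / 2 * binEnt |fhat g ∅| := by
  have h := binEnt_abs_le_add (condProbTrue_mem_Icc g i true) (condProbTrue_mem_Icc g i (!true))
    (condProbTrue_add_condProbTrue_not g i true)
  rw [MI_eq_condProbTrue g i true, probTrue_eq_fhat_empty]
  linarith

lemma MI_of_canalizing {n : ℕ} {f : (Fin n → Bool) → Bool} {i : Fin n} {a b : Bool}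
    (hcan : ∀ x : Fin n → Bool, x i = a → f x = b) :
    MI f i = binEnt ((1 + fhat f ∅) / 2) - 1 / 2 * binEnt |fhat f ∅| := by
  have hsum := condProbTrue_add_condProbTrue_not f i a
  have hle := condProbTrue_mem_Icc f i (!a)
  rw [condProbTrue_of_canalizing hcan] at hsum
  rw [MI_eq_condProbTrue f i a, probTrue_eq_fhat_empty, condProbTrue_of_canalizing hcan]
  cases b <;> simp only [Bool.false_eq_true, if_true, if_false] at hsum ⊢
  · have hq : condProbTrue f i (!a) = 1 - |fhat f ∅| := by
      rw [abs_of_nonpos (by linarith [hle.2])]; linarith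
    rw [hq, binEnt_one_sub, binEnt_zero]
    ring
  · have hq : condProbTrue f i (!a) = |fhat f ∅| := by
      rw [abs_of_nonneg (by linarith [hle.1])]; linarith
    rw [hq, binEnt_one]
    ring

theorem canalizing_maximizes_mi_general {n : ℕ} (f : (Fin n → Bool) → Bool) (i : Fin n)
    (a b : Bool) (hcan : ∀ x : Fin n → Bool, x i = a → f x = b)
    (c : ℝ) (hc : fhat f ∅ = c) :
    (∀ g : (Fin n → Bool) → Bool, fhat g ∅ = c → MI g i ≤ MI f i) ∧
    MI f i = binEnt ((1 + c) / 2) - (1 / 2) * binEnt |c| := by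
  have hf : MI f i = binEnt ((1 + c) / 2) - (1 / 2) * binEnt |c| := hc ▸ MI_of_canalizing hcan
  refine ⟨fun g hg => ?_, hf⟩
  rw [hf, ← hg]
  exact MI_le_binEnt_sub_half_binEnt_abs g i

/-- Among all Boolean functions with a fixed value of `f̂(∅) = c`, every function
canalizing in variable `i` achieves the maximal mutual information
`h((1+c)/2) - (1/2)·h(|c|)`. -/
theorem canalizing_maximizes_mi {n : ℕ} (f : (Fin n → Bool) → Bool) (i : Fin n)
    (a b : Bool) (hcan : ∀ x : Fin n → Bool, x i = a → f x = b)
    (c : ℝ) (hc : fhat f ∅ = c) (hc1 : |c| < 1) :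
    (∀ g : (Fin n → Bool) → Bool, fhat g ∅ = c → MI g i ≤ MI f i) ∧
    MI f i = binEnt ((1 + c) / 2) - (1 / 2) * binEnt |c| :=
  canalizing_maximizes_mi_general f i a b hcan c hc
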